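/- Let S be a feasible schedule, let C ⊆ T satisfy vol_S(C) = fv(C), let D ⊆ T with C ∩ D ≠ ∅, and let c, δ be integers with c ≥ δ ≥ 1. If vol_S(C ∩ D) > (c−1)·|C ∩ D| and fv(C ∩ D) ≤ (c−δ)·|C ∩ D|, then there exist at least δ distinct jobs j with uv_S(j, C ∩ D) > 0; moreover, every job j with uv_S(j, C ∩ D) > 0 satisfies E_j ∩ (C \ D) ≠ ∅ and is scheduled (on some processor) at every slot of E_j \ C. -/

import Mathlib

open Finset

/-- Execution interval of job `j`: the slots between its release time and deadline. -/
def Ei {J : Type} (r dl : J → ℕ) (j : J) : Finset ℕ := Finset.Icc (r j) (dl j)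

/-- The time horizon `T = {0, …, d}`, where `d` is the maximal deadline. -/
def Tslots {J : Type} [Fintype J] (dl : J → ℕ) : Finset ℕ :=
  Finset.Icc 0 (Finset.univ.sup dl)

/-- A schedule assigns to each processor and slot at most one job; it is feasible if
every job `j` is assigned to exactly `p j` processor/slot pairs, all of whose slots lie
in `E j`, and no job is assigned to two different processors at the same slot. -/
def Feasible {J : Type} [Fintype J] [DecidableEq J] (r dl p : J → ℕ) (m : ℕ)
    (S : Fin m → ℕ → Option J) : Prop :=
  (∀ (k : Fin m) (t : ℕ) (j : J), S k t = some j → t ∈ Ei r dl j) ∧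
  (∀ j : J, ((Finset.univ ×ˢ Tslots dl).filter
      (fun kt : Fin m × ℕ => S kt.1 kt.2 = some j)).card = p j) ∧
  (∀ (t : ℕ) (j : J) (k k' : Fin m), S k t = some j → S k' t = some j → k = k')

/-- Number of processors busy at slot `t` in schedule `S`. -/
def volT {J : Type} [DecidableEq J] {m : ℕ} (S : Fin m → ℕ → Option J) (t : ℕ) : ℕ :=
  (Finset.univ.filter (fun k : Fin m => (S k t).isSome)).card

/-- Number of slots of `Q` at which job `j` is scheduled in `S`. -/
def volJ {J : Type} [DecidableEq J] {m : ℕ} (S : Fin m → ℕ → Option J) (j : J)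
    (Q : Finset ℕ) : ℕ :=
  (Q.filter (fun t => ∃ k, S k t = some j)).card

/-- Total volume scheduled in `Q` by `S`. -/
def volQ {J : Type} [Fintype J] [DecidableEq J] {m : ℕ} (S : Fin m → ℕ → Option J)
    (Q : Finset ℕ) : ℕ :=
  ∑ j, volJ S j Q

/-- Forced volume of job `j` in `Q`: `max {0, p j − |E j \ Q|}`. -/
def fvJ {J : Type} (r dl p : J → ℕ) (j : J) (Q : Finset ℕ) : ℕ :=
  p j - (Ei r dl j \ Q).card

/-- Total forced volume in `Q`. -/
def fvQ {J : Type} [Fintype J] (r dl p : J → ℕ) (Q : Finset ℕ) : ℕ :=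
  ∑ j, fvJ r dl p j Q

/-- Possible volume of job `j` in `Q`: `min {p j, |E j ∩ Q|}`. -/
def pvJ {J : Type} (r dl p : J → ℕ) (j : J) (Q : Finset ℕ) : ℕ :=
  min (p j) ((Ei r dl j) ∩ Q).card

/-- Total possible volume in `Q`. -/
def pvQ {J : Type} [Fintype J] (r dl p : J → ℕ) (Q : Finset ℕ) : ℕ :=
  ∑ j, pvJ r dl p j Q

/-- The unnecessary volume of job `j` in `Q` under `S`: `vol − fv` (as an integer). -/
def uvJ {J : Type} [DecidableEq J] {m : ℕ} (S : Fin m → ℕ → Option J)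
    (r dl p : J → ℕ) (j : J) (Q : Finset ℕ) : ℤ :=
  (volJ S j Q : ℤ) - (fvJ r dl p j Q : ℤ)

/-!
Since `S` has no unnecessary volume in `C` and unnecessary volume is nonnegative, every job is
tight on `C`. A job with unnecessary volume in `Q = C ∩ D` therefore sees a different part of
`C` than of `Q`, i.e. its window meets `C \ D`, and being tight on `C` with positive volume
there means it runs in every slot of its window outside `C`. For the count, each job
contributes at most `|Q|` unnecessary volume, while in total
`vol(Q) - fv(Q) > (c - 1)|Q| - (c - δ)|Q| = (δ - 1)|Q|`.
-/

theorem Finset.sum_le_card_filter_pos_nsmul {ι M : Type*} [AddCommMonoid M] [LinearOrder M]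
    [IsOrderedAddMonoid M] (s : Finset ι) (f : ι → M) (B : M) (hB : ∀ i ∈ s, f i ≤ B) :
    ∑ i ∈ s, f i ≤ #(s.filter (0 < f ·)) • B := by
  rw [← sum_filter_add_sum_filter_not s (0 < f ·)]
  calc ∑ i ∈ s.filter (0 < f ·), f i + ∑ i ∈ s.filter (¬ 0 < f ·), f i
      ≤ ∑ i ∈ s.filter (0 < f ·), f i + 0 := by
        gcongr
        exact sum_nonpos fun i hi => not_lt.mp (mem_filter.mp hi).2
    _ ≤ #(s.filter (0 < f ·)) • B := by
        rw [add_zero]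
        exact sum_le_card_nsmul _ _ _ fun i hi => hB i (mem_filter.mp hi).1

theorem Ei_subset_Tslots {J : Type} [Fintype J] (r dl : J → ℕ) (j : J) :
    Ei r dl j ⊆ Tslots dl := by
  intro t ht
  simp only [Ei, Tslots, mem_Icc] at ht ⊢
  exact ⟨Nat.zero_le _, ht.2.trans (le_sup (mem_univ j))⟩

section Volume

variable {J : Type} [DecidableEq J] {m : ℕ} {S : Fin m → ℕ → Option J} {r dl p : J → ℕ}

theorem volJ_mono {Q Q' : Finset ℕ} (h : Q ⊆ Q') (j : J) : volJ S j Q ≤ volJ S j Q' :=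
  card_le_card (filter_subset_filter _ h)

theorem volJ_le_card (j : J) (Q : Finset ℕ) : volJ S j Q ≤ #Q :=
  card_filter_le _ _

theorem volJ_inter_add_volJ_sdiff (j : J) (A Q : Finset ℕ) :
    volJ S j (A ∩ Q) + volJ S j (A \ Q) = volJ S j A := by
  rw [volJ, volJ, volJ, ← card_inter_add_card_sdiff {t ∈ A | ∃ k, S k t = some j} Q]
  congr 2 <;> ext t <;> simp only [mem_filter, mem_inter, mem_sdiff] <;> tauto

theorem uvJ_le_volJ (j : J) (Q : Finset ℕ) : uvJ S r dl p j Q ≤ volJ S j Q := by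
  simp [uvJ]

theorem uvJ_le_card (j : J) (Q : Finset ℕ) : uvJ S r dl p j Q ≤ #Q :=
  (uvJ_le_volJ j Q).trans (mod_cast volJ_le_card j Q)

theorem sum_uvJ [Fintype J] (Q : Finset ℕ) :
    ∑ j, uvJ S r dl p j Q = (volQ S Q : ℤ) - fvQ r dl p Q := by
  simp only [uvJ, volQ, fvQ, Nat.cast_sum, sum_sub_distrib]

theorem volQ_le_fvQ_add_card_mul [Fintype J] (Q : Finset ℕ) :
    volQ S Q ≤ fvQ r dl p Q + #{j | 0 < uvJ S r dl p j Q} * #Q := by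
  have h := sum_le_card_filter_pos_nsmul univ (uvJ S r dl p · Q) #Q
    fun j _ => uvJ_le_card j Q
  rw [sum_uvJ, nsmul_eq_mul] at h
  omega

namespace Feasible

variable [Fintype J]

theorem volJ_Ei (hS : Feasible r dl p m S) (j : J) : volJ S j (Ei r dl j) = p j := by
  obtain ⟨hwindow, hcount, hunique⟩ := hS
  rw [volJ, ← hcount j]
  have hslots : ((univ ×ˢ Tslots dl).filter fun kt : Fin m × ℕ => S kt.1 kt.2 = some j).image
      Prod.snd = (Ei r dl j).filter fun t => ∃ k, S k t = some j := by
    ext t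
    simp only [mem_image, mem_filter, mem_product, mem_univ, true_and, Prod.exists]
    constructor
    · rintro ⟨k, t, ⟨-, hkt⟩, rfl⟩
      exact ⟨hwindow _ _ _ hkt, k, hkt⟩
    · rintro ⟨ht, k, hkt⟩
      exact ⟨k, t, ⟨Ei_subset_Tslots r dl j ht, hkt⟩, rfl⟩
  rw [← hslots, card_image_of_injOn]
  rintro ⟨k, t⟩ hkt ⟨k', t'⟩ hkt' (rfl : t = t')
  simp only [coe_filter, Set.mem_ofPred_eq] at hkt hkt'
  rw [hunique t j k k' hkt.2 hkt'.2]

theorem volJ_Ei_inter (hS : Feasible r dl p m S) (j : J) (Q : Finset ℕ) :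
    volJ S j (Ei r dl j ∩ Q) = volJ S j Q := by
  rw [volJ, volJ]
  congr 1
  ext t
  simp only [mem_filter, mem_inter]
  exact ⟨fun ⟨⟨_, hQ⟩, hk⟩ => ⟨hQ, hk⟩,
    fun ⟨hQ, k, hk⟩ => ⟨⟨hS.1 k t j hk, hQ⟩, k, hk⟩⟩

theorem volJ_add_volJ_Ei_sdiff (hS : Feasible r dl p m S) (j : J) (Q : Finset ℕ) :
    volJ S j Q + volJ S j (Ei r dl j \ Q) = p j := by
  rw [← hS.volJ_Ei_inter, volJ_inter_add_volJ_sdiff, hS.volJ_Ei]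

theorem uvJ_nonneg (hS : Feasible r dl p m S) (j : J) (Q : Finset ℕ) :
    0 ≤ uvJ S r dl p j Q := by
  have hsplit := hS.volJ_add_volJ_Ei_sdiff j Q
  have houtside := volJ_le_card (S := S) j (Ei r dl j \ Q)
  simp only [uvJ, fvJ, sub_nonneg]
  omega

theorem uvJ_eq_zero_of_volQ_eq_fvQ (hS : Feasible r dl p m S) {C : Finset ℕ}
    (htight : volQ S C = fvQ r dl p C) (j : J) : uvJ S r dl p j C = 0 :=
  (sum_eq_zero_iff_of_nonneg fun i _ => hS.uvJ_nonneg i C).mp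
    (by rw [sum_uvJ, htight, sub_self]) j (mem_univ j)

theorem uvJ_congr (hS : Feasible r dl p m S) (j : J) {Q Q' : Finset ℕ}
    (h : Ei r dl j ∩ Q = Ei r dl j ∩ Q') : uvJ S r dl p j Q = uvJ S r dl p j Q' := by
  have hfv : fvJ r dl p j Q = fvJ r dl p j Q' := by
    rw [fvJ, fvJ, ← sdiff_inter_self_left _ Q, h, sdiff_inter_self_left]
  rw [uvJ, uvJ, hfv, ← hS.volJ_Ei_inter j Q, h, hS.volJ_Ei_inter]

theorem Ei_inter_sdiff_nonempty (hS : Feasible r dl p m S) {j : J} {Q C : Finset ℕ}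
    (hQC : Q ⊆ C) (hC : uvJ S r dl p j C = 0) (hQ : 0 < uvJ S r dl p j Q) :
    (Ei r dl j ∩ (C \ Q)).Nonempty := by
  by_contra hempty
  have hsame : Ei r dl j ∩ C = Ei r dl j ∩ Q := by
    ext t
    simp only [mem_inter]
    refine ⟨fun ⟨hE, hC⟩ => ⟨hE, ?_⟩, fun ⟨hE, hQ⟩ => ⟨hE, hQC hQ⟩⟩
    by_contra htQ
    exact hempty ⟨t, mem_inter.mpr ⟨hE, mem_sdiff.mpr ⟨hC, htQ⟩⟩⟩
  rw [hS.uvJ_congr j hsame] at hC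
  exact hQ.ne' hC

/-- A job that is tight on `C` with positive volume there has its forced volume
`p j - |E j \ C|` untruncated, so it must fill all of `E j \ C`. -/
theorem forall_mem_Ei_sdiff_scheduled (hS : Feasible r dl p m S) {j : J} {C : Finset ℕ}
    (hC : uvJ S r dl p j C = 0) (hpos : 0 < volJ S j C) :
    ∀ t ∈ Ei r dl j \ C, ∃ k, S k t = some j := by
  have hsplit := hS.volJ_add_volJ_Ei_sdiff j C
  have houtside := volJ_le_card (S := S) j (Ei r dl j \ C)
  simp only [uvJ, fvJ, sub_eq_zero] at hC
  exact filter_card_eq (by rw [← volJ]; omega)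

end Feasible

end Volume

theorem valley_jobs_general (J : Type) [Fintype J] [DecidableEq J]
    (r dl p : J → ℕ)
    (m : ℕ)
    (S : Fin m → ℕ → Option J) (hS : Feasible r dl p m S)
    (C D : Finset ℕ)
    (c δ : ℕ) (hcδ : δ ≤ c)
    (htight : volQ S C = fvQ r dl p C)
    (hvol : (c - 1) * (C ∩ D).card < volQ S (C ∩ D))
    (hfv : fvQ r dl p (C ∩ D) ≤ (c - δ) * (C ∩ D).card) :
    δ ≤ (Finset.univ.filter (fun j : J => 0 < uvJ S r dl p j (C ∩ D))).card ∧
    (∀ j : J, 0 < uvJ S r dl p j (C ∩ D) →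
      (Ei r dl j ∩ (C \ D)).Nonempty ∧
      (∀ t ∈ Ei r dl j \ C, ∃ k : Fin m, S k t = some j)) := by
  refine ⟨?_, fun j hj => ?_⟩
  · have hbound := volQ_le_fvQ_add_card_mul (S := S) (r := r) (dl := dl) (p := p) (C ∩ D)
    have hcount : (c - 1) * #(C ∩ D) <
        (c - δ + #{j | 0 < uvJ S r dl p j (C ∩ D)}) * #(C ∩ D) := by
      rw [add_mul]
      omega
    have := Nat.lt_of_mul_lt_mul_right hcount
    omega
  have hC := hS.uvJ_eq_zero_of_volQ_eq_fvQ htight j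
  refine ⟨?_, hS.forall_mem_Ei_sdiff_scheduled hC ?_⟩
  · rw [← sdiff_inter_self_left C D]
    exact hS.Ei_inter_sdiff_nonempty inter_subset_left hC hj
  · have hpos : (0 : ℤ) < volJ S j (C ∩ D) := hj.trans_le (uvJ_le_volJ j (C ∩ D))
    exact (mod_cast hpos : 0 < volJ S j (C ∩ D)).trans_le (volJ_mono inter_subset_left j)

/-- If `S` is tight on `C` (`vol_S(C) = fv(C)`), `vol_S(C∩D) > (c−1)·|C∩D|` and
`fv(C∩D) ≤ (c−δ)·|C∩D|`, then at least `δ` distinct jobs have positive unnecessary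
volume in `C∩D`; moreover every such job has an execution interval meeting `C \ D` and
is scheduled at every slot of `E j \ C`. -/
theorem valley_jobs (J : Type) [Fintype J] [DecidableEq J]
    (r dl p : J → ℕ) (hrd : ∀ j, r j ≤ dl j) (hp : ∀ j, p j ≤ dl j - r j + 1)
    (m : ℕ) (hm : 1 ≤ m)
    (S : Fin m → ℕ → Option J) (hS : Feasible r dl p m S)
    (C D : Finset ℕ) (hC : C ⊆ Tslots dl) (hD : D ⊆ Tslots dl)
    (hCD : (C ∩ D).Nonempty)
    (c δ : ℕ) (hδ : 1 ≤ δ) (hcδ : δ ≤ c)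
    (htight : volQ S C = fvQ r dl p C)
    (hvol : (c - 1) * (C ∩ D).card < volQ S (C ∩ D))
    (hfv : fvQ r dl p (C ∩ D) ≤ (c - δ) * (C ∩ D).card) :
    δ ≤ (Finset.univ.filter (fun j : J => 0 < uvJ S r dl p j (C ∩ D))).card ∧
    (∀ j : J, 0 < uvJ S r dl p j (C ∩ D) →
      (Ei r dl j ∩ (C \ D)).Nonempty ∧
      (∀ t ∈ Ei r dl j \ C, ∃ k : Fin m, S k t = some j)) :=
  valley_jobs_general J r dl p m S hS C D c δ hcδ htight hvol hfv
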